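/- arXiv:1611.06766 — 2 statements merged into one kernel-verified Lean document; each statement's English description precedes it below -/
import Mathlib

section
/- (Lemma 4.) Consider a monotonic CTM controlled by the best-effort policy, with ρ_j(t) ∈ [0, ρ̄_j], 0 ≤ q_j(t) ≤ q̄_j, and 0 ≤ w_j(t) ≤ r̄_j for all j at time t. Suppose that at cell k the queue-saturated best-effort value satisfies 0 ≤ [ (l_k/Δt)(ρ_k^c − ρ_k(t)) + φ_k(t)/β̄_k − φ_{k−1}(t) ] saturated to the interval [ (q_k(t) − q̄_k)/Δt + w_k(t), q_k(t)/Δt + w_k(t) ] ≤ r̄_k, i.e., the best-effort rate at cell k is not affected by the constant metering bounds 0 ≤ r ≤ r̄_k. Then, with r*_j(t) applied at all cells, cell k is nonrestrictive at time t+1. -/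
open Finset NNReal

/-- A **monotonic Cell Transmission Model** (CTM) of a freeway with `n` cells,
indexed by `k ∈ {1,…,n}` (index `0` refers to the upstream mainline boundary,
and the data attached to indices outside `{1,…,n}` is irrelevant junk).
The fields collect the parameters of the model: cell lengths `l k > 0`,
offramp split ratios `β k ∈ [0,1)`, sampling time `Δt > 0`, jam densities
`ρjam k > 0`, critical densities `ρc k ∈ (0, ρjam k)`, nondecreasing Lipschitz
demand functions `d k` (vanishing for `ρ ≤ 0` and constant on `[ρc k, ∞)`),
nonincreasing Lipschitz supply functions `s k` (constant on `(-∞, ρc k]` and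
vanishing on `[ρjam k, ∞)`), together with Assumption 1 of the paper:
`Δt·cd k ≤ l k·(1 − β k)` and `Δt·cs k ≤ l k`. -/
structure CTM (n : ℕ) where
  /-- cell lengths -/
  l : ℕ → ℝ
  /-- offramp split ratios -/
  β : ℕ → ℝ
  /-- sampling time -/
  Δt : ℝ
  /-- jam densities -/
  ρjam : ℕ → ℝ
  /-- critical densities -/
  ρc : ℕ → ℝ
  /-- demand functions of the fundamental diagram -/
  d : ℕ → ℝ → ℝ
  /-- supply functions of the fundamental diagram -/
  s : ℕ → ℝ → ℝ
  /-- Lipschitz constants of the demand functions -/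
  cd : ℕ → ℝ≥0
  /-- Lipschitz constants of the supply functions -/
  cs : ℕ → ℝ≥0
  hl : ∀ k, 0 < l k
  hβ : ∀ k, 0 ≤ β k ∧ β k < 1
  hΔt : 0 < Δt
  hρjam : ∀ k, 0 < ρjam k
  hρc : ∀ k, 0 < ρc k ∧ ρc k < ρjam k
  hd_nonneg : ∀ k x, 0 ≤ d k x
  hd_mono : ∀ k, Monotone (d k)
  hd_lip : ∀ k, LipschitzWith (cd k) (d k)
  hd_zero : ∀ k x, x ≤ 0 → d k x = 0
  hd_const : ∀ k x, ρc k ≤ x → d k x = d k (ρc k)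
  hs_nonneg : ∀ k x, 0 ≤ s k x
  hs_anti : ∀ k, Antitone (s k)
  hs_lip : ∀ k, LipschitzWith (cs k) (s k)
  hs_const : ∀ k x, x ≤ ρc k → s k x = s k (ρc k)
  hs_zero : ∀ k x, ρjam k ≤ x → s k x = 0
  /-- Assumption 1, demand part: `Δt·cd k ≤ l k·β̄ k`. -/
  assumption1_d : ∀ k, Δt * (cd k : ℝ) ≤ l k * (1 - β k)
  /-- Assumption 1, supply part: `Δt·cs k ≤ l k`. -/
  assumption1_s : ∀ k, Δt * (cs k : ℝ) ≤ l k

namespace CTM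

variable {n : ℕ}

/-- Complement `β̄ k := 1 − β k` of the split ratio. -/
def βbar (M : CTM n) (k : ℕ) : ℝ := 1 - M.β k

/-- Mainline flows as functions of the densities: `φ_0 = w_0` (external upstream
demand), `φ_k = min{d_k(ρ_k), s_{k+1}(ρ_{k+1})}` for `1 ≤ k ≤ n−1`, and
`φ_n = d_n(ρ_n)`. -/
noncomputable def flow (M : CTM n) (w0 : ℝ) (ρ : ℕ → ℝ) (k : ℕ) : ℝ :=
  if k = 0 then w0
  else if k < n then min (M.d k (ρ k)) (M.s (k + 1) (ρ (k + 1)))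
  else M.d n (ρ n)

/-- Interface capacities: `F_k = min{d_k(ρ_k^c), s_{k+1}(ρ_{k+1}^c)}` for
`k ≤ n−1` and `F_n = d_n(ρ_n^c)`. -/
noncomputable def F (M : CTM n) (k : ℕ) : ℝ :=
  if k < n then min (M.d k (M.ρc k)) (M.s (k + 1) (M.ρc (k + 1)))
  else M.d n (M.ρc n)

/-- Saturation `[x]ᵘₗ := min{u, max{x, l}}`. -/
noncomputable def sat (x lo hi : ℝ) : ℝ := min hi (max x lo)

/-- The best-effort metering rate
`r*_k = [ (l_k/Δt)(ρ_k^c − ρ_k) + φ_k/β̄_k − φ_{k−1} ]` saturated to the interval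
`[max{0, (q_k − q̄_k)/Δt + w_k}, min{r̄_k, q_k/Δt + w_k}]`. -/
noncomputable def beRate (M : CTM n) (w0 : ℝ) (ρ q w rbar qbar : ℕ → ℝ) (k : ℕ) : ℝ :=
  sat (M.l k / M.Δt * (M.ρc k - ρ k) + M.flow w0 ρ k / M.βbar k - M.flow w0 ρ (k - 1))
      (max 0 ((q k - qbar k) / M.Δt + w k))
      (min (rbar k) (q k / M.Δt + w k))

/-- One step of the density conservation law:
`ρ_k(t+1) = ρ_k(t) + (Δt/l_k)(φ_{k−1}(t) + r_k(t) − φ_k(t)/β̄_k)`. -/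
noncomputable def ρnext (M : CTM n) (w0 : ℝ) (ρ r : ℕ → ℝ) (k : ℕ) : ℝ :=
  ρ k + M.Δt / M.l k * (M.flow w0 ρ (k - 1) + r k - M.flow w0 ρ k / M.βbar k)

/-- Cell `k` is **restrictive** (Definition 1) if either (i) the onramp is not
full and the inflow is limited by non-maximal supply, or (ii) the onramp is
nonempty and the outflow is limited by non-maximal demand. -/
noncomputable def Restrictive (M : CTM n) (w0 : ℝ) (ρ q qbar : ℕ → ℝ) (k : ℕ) : Prop :=
  (q k < qbar k ∧ M.flow w0 ρ (k - 1) = M.s k (ρ k) ∧ M.s k (ρ k) < M.F (k - 1)) ∨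
  (0 < q k ∧ M.flow w0 ρ k = M.d k (ρ k) ∧ M.d k (ρ k) < M.F k)

/-- Densities recovered from the cumulative state of the CCTM:
`ρ_k = (Φ_{k−1} − Φ_k/β̄_k + R_k)/l_k`. -/
noncomputable def ρof (M : CTM n) (Φ R : ℕ → ℝ) (k : ℕ) : ℝ :=
  (Φ (k - 1) - Φ k / M.βbar k + R k) / M.l k

/-- The CCTM update maps `f_k(Φ, R) := Φ_k + Δt·φ_k`. -/
noncomputable def f (M : CTM n) (w0 : ℝ) (Φ R : ℕ → ℝ) (k : ℕ) : ℝ :=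
  Φ k + M.Δt * M.flow w0 (M.ρof Φ R) k

/-- `Traj M w ρ q r` states that the densities `ρ`, queues `q` obey the CTM
conservation laws under the metering rates `r` and external demands `w`
(`w t 0` is the upstream mainline demand, `w t k` the onramp demand at cell `k`). -/
noncomputable def Traj (M : CTM n) (w : ℕ → ℕ → ℝ) (ρ q r : ℕ → ℕ → ℝ) : Prop :=
  ∀ t k, 1 ≤ k → k ≤ n →
    ρ (t + 1) k = M.ρnext (w t 0) (ρ t) (r t) k ∧
    q (t + 1) k = q t k + M.Δt * (w t k - r t k)

/-- Total Time Spent `TTS = Δt · Σ_{t=0}^{T} Σ_{k=1}^{n} (l_k ρ_k(t) + q_k(t))`. -/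
noncomputable def TTS (M : CTM n) (T : ℕ) (ρ q : ℕ → ℕ → ℝ) : ℝ :=
  M.Δt * ∑ t ∈ Finset.range (T + 1), ∑ k ∈ Finset.Icc 1 n, (M.l k * ρ t k + q t k)

end CTM

/-!
With `X` the unsaturated best-effort value at cell `k`, the next density is
`ρ_k^c + (Δt/l_k)(r_k − X)`, and when the bounds `0 ≤ r ≤ r̄_k` are inactive `r_k` differs
from `X` only by the queue bounds. Clause (i) of restrictiveness needs a supply below capacity,
hence a supercritical next density, i.e. `r_k > X`; but then `r_k` sits at its lower queue bound
and the onramp becomes full. Clause (ii) needs a subcritical next density, i.e. `r_k < X`; then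
`r_k` sits at its upper queue bound and the onramp is emptied.
-/

section Queue

variable {q qbar w r Δt : ℝ}

theorem le_add_mul_sub_of_le_div_add (hΔt : 0 < Δt) (h : r ≤ (q - qbar) / Δt + w) :
    qbar ≤ q + Δt * (w - r) := by
  have : Δt * r ≤ q - qbar + Δt * w := by
    calc Δt * r ≤ Δt * ((q - qbar) / Δt + w) := mul_le_mul_of_nonneg_left h hΔt.le
      _ = q - qbar + Δt * w := by field_simp
  linarith

theorem add_mul_sub_div_add_eq_zero (hΔt : Δt ≠ 0) : q + Δt * (w - (q / Δt + w)) = 0 := by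
  field_simp
  ring

end Queue

namespace CTM

section Saturation

variable {x lo hi : ℝ}

theorem sat_max_min_eq {rb : ℝ} (h0 : 0 ≤ sat x lo hi) (hrb : sat x lo hi ≤ rb) :
    sat x (max 0 lo) (min rb hi) = sat x lo hi := by
  unfold sat at *
  have hmax : 0 ≤ max x lo := h0.trans (min_le_right _ _)
  rw [max_left_comm, max_eq_right hmax, min_assoc, min_eq_right hrb]

theorem sat_eq_hi_of_lt (h : sat x lo hi < x) : sat x lo hi = hi := by
  unfold sat at *
  by_contra hne
  rw [min_eq_right (le_of_not_ge fun h' => hne (min_eq_left h'))] at h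
  exact (le_max_left x lo).not_gt h

theorem sat_le_lo_of_gt (h : x < sat x lo hi) : sat x lo hi ≤ lo := by
  unfold sat at *
  have hlt : x < max x lo := h.trans_le (min_le_right _ _)
  calc min hi (max x lo) ≤ max x lo := min_le_right _ _
    _ = lo := max_eq_right (lt_max_iff.mp hlt |>.resolve_left (lt_irrefl x)).le

end Saturation

variable {n : ℕ} (M : CTM n)

noncomputable def beTarget (w0 : ℝ) (ρ : ℕ → ℝ) (k : ℕ) : ℝ :=
  M.l k / M.Δt * (M.ρc k - ρ k) + M.flow w0 ρ k / M.βbar k - M.flow w0 ρ (k - 1)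

theorem ρnext_eq_ρc_add (w0 : ℝ) (ρ r : ℕ → ℝ) (k : ℕ) :
    M.ρnext w0 ρ r k = M.ρc k + M.Δt / M.l k * (r k - M.beTarget w0 ρ k) := by
  have := M.hΔt.ne'
  have := (M.hl k).ne'
  unfold ρnext beTarget
  field_simp
  ring

theorem ρnext_le_ρc {w0 : ℝ} {ρ r : ℕ → ℝ} {k : ℕ} (h : r k ≤ M.beTarget w0 ρ k) :
    M.ρnext w0 ρ r k ≤ M.ρc k := by
  rw [ρnext_eq_ρc_add]
  have := mul_nonpos_of_nonneg_of_nonpos (div_pos M.hΔt (M.hl k)).le (sub_nonpos.mpr h)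
  linarith

theorem ρc_le_ρnext {w0 : ℝ} {ρ r : ℕ → ℝ} {k : ℕ} (h : M.beTarget w0 ρ k ≤ r k) :
    M.ρc k ≤ M.ρnext w0 ρ r k := by
  rw [ρnext_eq_ρc_add]
  have := mul_nonneg (div_pos M.hΔt (M.hl k)).le (sub_nonneg.mpr h)
  linarith

variable {k : ℕ}

theorem F_sub_one_le_s (hk1 : 1 ≤ k) (hkn : k ≤ n) : M.F (k - 1) ≤ M.s k (M.ρc k) := by
  rw [F, if_pos (by omega), Nat.sub_add_cancel hk1]
  exact min_le_right _ _

theorem F_le_d (hkn : k ≤ n) : M.F k ≤ M.d k (M.ρc k) := by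
  unfold F
  split_ifs with hlt
  · exact min_le_left _ _
  · rw [show k = n by omega]

theorem F_sub_one_le_s_ρnext {w0 : ℝ} {ρ r : ℕ → ℝ} (hk1 : 1 ≤ k) (hkn : k ≤ n)
    (h : r k ≤ M.beTarget w0 ρ k) : M.F (k - 1) ≤ M.s k (M.ρnext w0 ρ r k) := by
  rw [M.hs_const k _ (M.ρnext_le_ρc h)]
  exact M.F_sub_one_le_s hk1 hkn

theorem F_le_d_ρnext {w0 : ℝ} {ρ r : ℕ → ℝ} (hkn : k ≤ n)
    (h : M.beTarget w0 ρ k ≤ r k) : M.F k ≤ M.d k (M.ρnext w0 ρ r k) := by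
  rw [M.hd_const k _ (M.ρc_le_ρnext h)]
  exact M.F_le_d hkn

end CTM

theorem beRate_gives_nonrestrictive_general {n : ℕ} (M : CTM n) (w0 w0next : ℝ)
    (ρ q w rbar qbar : ℕ → ℝ)
    (k : ℕ) (hk1 : 1 ≤ k) (hkn : k ≤ n)
    (hunsat_lo : 0 ≤ CTM.sat
        (M.l k / M.Δt * (M.ρc k - ρ k) + M.flow w0 ρ k / M.βbar k - M.flow w0 ρ (k - 1))
        ((q k - qbar k) / M.Δt + w k) (q k / M.Δt + w k))
    (hunsat_hi : CTM.sat
        (M.l k / M.Δt * (M.ρc k - ρ k) + M.flow w0 ρ k / M.βbar k - M.flow w0 ρ (k - 1))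
        ((q k - qbar k) / M.Δt + w k) (q k / M.Δt + w k) ≤ rbar k) :
    ¬ M.Restrictive w0next
        (M.ρnext w0 ρ (M.beRate w0 ρ q w rbar qbar))
        (fun j => q j + M.Δt * (w j - M.beRate w0 ρ q w rbar qbar j))
        qbar k := by
  set r := M.beRate w0 ρ q w rbar qbar
  have hr : r k = CTM.sat (M.beTarget w0 ρ k) ((q k - qbar k) / M.Δt + w k) (q k / M.Δt + w k) :=
    CTM.sat_max_min_eq hunsat_lo hunsat_hi
  rintro (⟨hq_lt, -, hs_lt⟩ | ⟨hq_pos, -, hd_lt⟩)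
  · rcases le_or_gt (r k) (M.beTarget w0 ρ k) with hle | hgt
    · exact (M.F_sub_one_le_s_ρnext hk1 hkn hle).not_gt hs_lt
    · have hlo := CTM.sat_le_lo_of_gt (hr ▸ hgt)
      exact (le_add_mul_sub_of_le_div_add M.hΔt (hr ▸ hlo)).not_gt hq_lt
  · rcases le_or_gt (M.beTarget w0 ρ k) (r k) with hge | hlt
    · exact (M.F_le_d_ρnext hkn hge).not_gt hd_lt
    · have hhi := CTM.sat_eq_hi_of_lt (hr ▸ hlt)
      have hq_zero := add_mul_sub_div_add_eq_zero (q := q k) (w := w k) M.hΔt.ne'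
      rw [← hhi, ← hr] at hq_zero
      exact hq_pos.ne' hq_zero

/-- **Lemma 4.**  Consider a monotonic CTM controlled by the best-effort policy,
with `ρ_j(t) ∈ [0, ρ̄_j]`, `q_j(t) ∈ [0, q̄_j]`, and `0 ≤ w_j(t) ≤ r̄_j` for all `j`
at time `t`.  Suppose that at cell `k` the queue-saturated best-effort value
satisfies
`0 ≤ [ (l_k/Δt)(ρ_k^c − ρ_k(t)) + φ_k(t)/β̄_k − φ_{k−1}(t) ]` saturated to
`[(q_k(t) − q̄_k)/Δt + w_k(t), q_k(t)/Δt + w_k(t)] ≤ r̄_k`, i.e. the best-effort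
rate at cell `k` is not affected by the constant metering bounds `0 ≤ r ≤ r̄_k`.
Then, with the best-effort rates applied at all cells (and arbitrary next-step
upstream demand `w0next`), cell `k` is nonrestrictive at time `t+1`. -/
theorem beRate_gives_nonrestrictive {n : ℕ} (M : CTM n) (w0 w0next : ℝ)
    (ρ q w rbar qbar : ℕ → ℝ)
    (hρ : ∀ j, 1 ≤ j → j ≤ n → ρ j ∈ Set.Icc 0 (M.ρjam j))
    (hq : ∀ j, 1 ≤ j → j ≤ n → q j ∈ Set.Icc 0 (qbar j))
    (hw : ∀ j, 1 ≤ j → j ≤ n → w j ∈ Set.Icc 0 (rbar j))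
    (hrbar : ∀ j, 0 ≤ rbar j) (hqbar : ∀ j, 0 ≤ qbar j)
    (k : ℕ) (hk1 : 1 ≤ k) (hkn : k ≤ n)
    (hunsat_lo : 0 ≤ CTM.sat
        (M.l k / M.Δt * (M.ρc k - ρ k) + M.flow w0 ρ k / M.βbar k - M.flow w0 ρ (k - 1))
        ((q k - qbar k) / M.Δt + w k) (q k / M.Δt + w k))
    (hunsat_hi : CTM.sat
        (M.l k / M.Δt * (M.ρc k - ρ k) + M.flow w0 ρ k / M.βbar k - M.flow w0 ρ (k - 1))
        ((q k - qbar k) / M.Δt + w k) (q k / M.Δt + w k) ≤ rbar k) :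
    ¬ M.Restrictive w0next
        (M.ρnext w0 ρ (M.beRate w0 ρ q w rbar qbar))
        (fun j => q j + M.Δt * (w j - M.beRate w0 ρ q w rbar qbar j))
        qbar k :=
  beRate_gives_nonrestrictive_general M w0 w0next ρ q w rbar qbar k hk1 hkn hunsat_lo hunsat_hi
end

section
/- (Theorem 1: sufficient optimality conditions for minimal Total Time Spent.) Consider a monotonic CTM over a finite horizon T with fixed initial densities ρ_k(0) ∈ [0, ρ̄_k], initial queues q_k(0) ∈ [0, q̄_k], and external demands w_k(t) with 0 ≤ w_k(t) ≤ r̄_k. Suppose a feasible metering sequence r (i.e., 0 ≤ r_k(t) ≤ r̄_k and 0 ≤ q_k(t) ≤ q̄_k for all k, t) produces a trajectory in which every cell k ∈ {1,…,n} is nonrestrictive at every time t ∈ {1,…,T−1}. Then this trajectory minimizes the Total Time Spent: for every feasible metering sequence r′ with the same initial conditions and external demands, TTS(r) ≤ TTS(r′). -/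
open Finset NNReal

section Aux

namespace CTM

variable {n : ℕ} (M : CTM n)

lemma βbar_pos (k : ℕ) : 0 < M.βbar k := by
  have := (M.hβ k).2; unfold βbar; linarith

lemma βbar_le_one (k : ℕ) : M.βbar k ≤ 1 := by
  have := (M.hβ k).1; unfold βbar; linarith

lemma d_le_crit (k : ℕ) (x : ℝ) : M.d k x ≤ M.d k (M.ρc k) := by
  rcases le_total x (M.ρc k) with h | h
  · exact M.hd_mono k h
  · rw [M.hd_const k x h]

lemma s_le_crit (k : ℕ) (x : ℝ) : M.s k x ≤ M.s k (M.ρc k) := by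
  rcases le_total x (M.ρc k) with h | h
  · rw [M.hs_const k x h]
  · exact M.hs_anti k h

lemma flow_le_F (w0 : ℝ) (ρ : ℕ → ℝ) (k : ℕ) (hk : 1 ≤ k) :
    M.flow w0 ρ k ≤ M.F k := by
  unfold flow F
  rw [if_neg (by omega : ¬ k = 0)]
  by_cases h : k < n
  · rw [if_pos h, if_pos h]
    exact min_le_min (M.d_le_crit k _) (M.s_le_crit (k+1) _)
  · rw [if_neg h, if_neg h]
    exact M.d_le_crit n _

/-- demand-side monotone map (Assumption 1, demand part) -/
lemma mono_d_map (k : ℕ) (C : ℝ) {x y : ℝ} (hxy : x ≤ y) :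
    x + M.Δt * M.d k ((C - x / M.βbar k) / M.l k) ≤
    y + M.Δt * M.d k ((C - y / M.βbar k) / M.l k) := by
  have hB := M.βbar_pos k
  have hL := M.hl k
  have hδ : (0:ℝ) ≤ y - x := sub_nonneg.mpr hxy
  set u := (C - x / M.βbar k) / M.l k with hu
  set v := (C - y / M.βbar k) / M.l k with hv
  have huv : u - v = (y - x) / (M.βbar k * M.l k) := by
    rw [hu, hv, div_sub_div_same,
      show C - x / M.βbar k - (C - y / M.βbar k) = (y - x) / M.βbar k by ring,
      div_div]
  have hD : (0:ℝ) < M.βbar k * M.l k := by positivity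
  have hvu : v ≤ u := by
    have h0 : 0 ≤ u - v := by rw [huv]; exact div_nonneg hδ hD.le
    linarith
  have hlip : M.d k u - M.d k v ≤ (M.cd k : ℝ) * (u - v) := by
    have h1 := (M.hd_lip k).dist_le_mul u v
    rw [Real.dist_eq, Real.dist_eq, abs_of_nonneg (by linarith : (0:ℝ) ≤ u - v)] at h1
    calc M.d k u - M.d k v ≤ |M.d k u - M.d k v| := le_abs_self _
      _ ≤ (M.cd k : ℝ) * (u - v) := h1
  have hΔ := M.hΔt
  have hcd : (0:ℝ) ≤ (M.cd k : ℝ) := (M.cd k).coe_nonneg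
  have hA' : M.Δt * (M.cd k : ℝ) ≤ M.βbar k * M.l k := by
    have hA := M.assumption1_d k
    have hc := mul_comm (M.l k) (1 - M.β k)
    unfold βbar
    linarith
  have key : M.Δt * (M.d k u - M.d k v) ≤ y - x := by
    have h2 : M.Δt * (M.d k u - M.d k v) ≤ (M.Δt * (M.cd k : ℝ)) * (u - v) := by
      have := mul_le_mul_of_nonneg_left hlip (le_of_lt hΔ)
      nlinarith [this]
    have h3 : (M.Δt * (M.cd k : ℝ)) * (u - v) ≤ (M.βbar k * M.l k) * (u - v) :=
      mul_le_mul_of_nonneg_right hA' (by linarith)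
    have h4 : (M.βbar k * M.l k) * (u - v) = y - x := by
      rw [huv]; field_simp
    linarith
  rw [mul_sub] at key
  linarith

/-- supply-side monotone map (Assumption 1, supply part) -/
lemma mono_s_map (k : ℕ) (C : ℝ) {x y : ℝ} (hxy : x ≤ y) :
    x + M.Δt * M.s k ((C + x) / M.l k) ≤
    y + M.Δt * M.s k ((C + y) / M.l k) := by
  have hL := M.hl k
  have hδ : (0:ℝ) ≤ y - x := sub_nonneg.mpr hxy
  set u := (C + x) / M.l k with hu
  set v := (C + y) / M.l k with hv
  have huv : v - u = (y - x) / M.l k := by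
    rw [hu, hv, div_sub_div_same, show C + y - (C + x) = y - x by ring]
  have hvu : u ≤ v := by
    have h0 : 0 ≤ v - u := by rw [huv]; exact div_nonneg hδ hL.le
    linarith
  have hlip : M.s k u - M.s k v ≤ (M.cs k : ℝ) * (v - u) := by
    have h1 := (M.hs_lip k).dist_le_mul u v
    rw [Real.dist_eq, Real.dist_eq,
      abs_of_nonpos (by linarith : u - v ≤ 0)] at h1
    have h2 : -(u - v) = v - u := by ring
    rw [h2] at h1
    calc M.s k u - M.s k v ≤ |M.s k u - M.s k v| := le_abs_self _
      _ ≤ (M.cs k : ℝ) * (v - u) := h1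
  have hΔ := M.hΔt
  have hcs : (0:ℝ) ≤ (M.cs k : ℝ) := (M.cs k).coe_nonneg
  have hA' : M.Δt * (M.cs k : ℝ) ≤ M.l k := M.assumption1_s k
  have key : M.Δt * (M.s k u - M.s k v) ≤ y - x := by
    have h2 : M.Δt * (M.s k u - M.s k v) ≤ (M.Δt * (M.cs k : ℝ)) * (v - u) := by
      have := mul_le_mul_of_nonneg_left hlip (le_of_lt hΔ)
      nlinarith [this]
    have h3 : (M.Δt * (M.cs k : ℝ)) * (v - u) ≤ M.l k * (v - u) :=
      mul_le_mul_of_nonneg_right hA' (by linarith)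
    have h4 : M.l k * (v - u) = y - x := by
      rw [huv]; field_simp
    linarith
  rw [mul_sub] at key
  linarith

end CTM

/-- cumulative (scaled) sums -/
noncomputable def Cumul (c : ℝ) (f : ℕ → ℕ → ℝ) (t k : ℕ) : ℝ :=
  c * ∑ τ ∈ Finset.range t, f τ k

lemma Cumul_zero (c : ℝ) (f : ℕ → ℕ → ℝ) (k : ℕ) : Cumul c f 0 k = 0 := by
  simp [Cumul]

lemma Cumul_succ (c : ℝ) (f : ℕ → ℕ → ℝ) (t k : ℕ) :
    Cumul c f (t + 1) k = Cumul c f t k + c * f t k := by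
  rw [Cumul, Cumul, Finset.sum_range_succ]; ring

namespace CTM

variable {n : ℕ} (M : CTM n)

/-- density conservation in cumulative form -/
lemma density_formula {w ρ q r : ℕ → ℕ → ℝ} (htraj : M.Traj w ρ q r)
    (k : ℕ) (hk1 : 1 ≤ k) (hkn : k ≤ n) (t : ℕ) :
    M.l k * ρ t k = M.l k * ρ 0 k
      + Cumul M.Δt (fun τ => M.flow (w τ 0) (ρ τ)) t (k - 1)
      + Cumul M.Δt r t k
      - Cumul M.Δt (fun τ => M.flow (w τ 0) (ρ τ)) t k / M.βbar k := by
  have hl := (M.hl k).ne'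
  induction t with
  | zero => simp [Cumul_zero]
  | succ t ih =>
    have expand : M.l k * ρ (t+1) k = M.l k * ρ t k
        + M.Δt * (M.flow (w t 0) (ρ t) (k-1) + r t k
          - M.flow (w t 0) (ρ t) k / M.βbar k) := by
      rw [(htraj t k hk1 hkn).1, CTM.ρnext]
      field_simp
    rw [Cumul_succ, Cumul_succ, Cumul_succ, expand, ih]
    ring

/-- queue conservation in cumulative form -/
lemma queue_formula {w ρ q r : ℕ → ℕ → ℝ} (htraj : M.Traj w ρ q r)
    (k : ℕ) (hk1 : 1 ≤ k) (hkn : k ≤ n) (t : ℕ) :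
    q t k = q 0 k + Cumul M.Δt w t k - Cumul M.Δt r t k := by
  induction t with
  | zero => simp [Cumul_zero]
  | succ t ih =>
    rw [(htraj t k hk1 hkn).2, Cumul_succ, Cumul_succ, ih]; ring

end CTM

/-- telescoping comparison lemma -/
lemma sum_shift_le (n : ℕ) (g b : ℕ → ℝ) (hg0 : g 0 = 0)
    (hg : ∀ k, 1 ≤ k → k ≤ n → 0 ≤ g k)
    (hb : ∀ k, 0 < b k ∧ b k ≤ 1) :
    ∑ k ∈ Finset.Icc 1 n, (g (k - 1) - g k / b k) ≤ 0 := by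
  rcases Nat.eq_zero_or_pos n with rfl | hn
  · simp
  have step : ∀ k ∈ Finset.Icc 1 n, g (k - 1) - g k / b k ≤ g (k - 1) - g k := by
    intro k hk
    simp only [Finset.mem_Icc] at hk
    have hgk := hg k hk.1 hk.2
    have hbk := hb k
    have : g k ≤ g k / b k := by
      rw [le_div_iff₀ hbk.1]
      nlinarith
    linarith
  calc ∑ k ∈ Finset.Icc 1 n, (g (k - 1) - g k / b k)
      ≤ ∑ k ∈ Finset.Icc 1 n, (g (k - 1) - g k) := Finset.sum_le_sum step
    _ = ∑ i ∈ Finset.range n, (g i - g (i + 1)) := by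
        rw [← Finset.Ico_add_one_right_eq_Icc, Finset.sum_Ico_eq_sum_range,
          show n + 1 - 1 = n from rfl]
        apply Finset.sum_congr rfl
        intro i _
        have h1 : 1 + i - 1 = i := by omega
        rw [h1, Nat.add_comm 1 i]
    _ = g 0 - g n := Finset.sum_range_sub' g n
    _ ≤ 0 := by rw [hg0]; linarith [hg n hn le_rfl]

end Aux


section Helpers

/-- cumulative mainline flows along a trajectory -/
noncomputable def PhiOf {n : ℕ} (M : CTM n) (w ρ : ℕ → ℕ → ℝ) : ℕ → ℕ → ℝ :=
  Cumul M.Δt (fun τ => M.flow (w τ 0) (ρ τ))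

lemma PhiOf_zero {n : ℕ} (M : CTM n) (w ρ : ℕ → ℕ → ℝ) (k : ℕ) :
    PhiOf M w ρ 0 k = 0 := Cumul_zero _ _ _

lemma PhiOf_succ {n : ℕ} (M : CTM n) (w ρ : ℕ → ℕ → ℝ) (t k : ℕ) :
    PhiOf M w ρ (t + 1) k = PhiOf M w ρ t k + M.Δt * M.flow (w t 0) (ρ t) k :=
  Cumul_succ _ _ _ _

lemma PhiOf_col0 {n : ℕ} (M : CTM n) (w ρ ρ₂ : ℕ → ℕ → ℝ) (t : ℕ) :
    PhiOf M w ρ t 0 = PhiOf M w ρ₂ t 0 := by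
  simp [PhiOf, Cumul, CTM.flow]

lemma CTM.flow_congr {n : ℕ} (M : CTM n) (w0 : ℝ) {ρ1 ρ2 : ℕ → ℝ}
    (h : ∀ j, 1 ≤ j → j ≤ n → ρ1 j = ρ2 j) (k : ℕ) (hk1 : 1 ≤ k) (hkn : k ≤ n) :
    M.flow w0 ρ1 k = M.flow w0 ρ2 k := by
  unfold CTM.flow
  by_cases hlt : k < n
  · rw [if_neg (by omega : ¬ k = 0), if_neg (by omega : ¬ k = 0), if_pos hlt, if_pos hlt,
      h k hk1 hkn, h (k+1) (by omega) (by omega)]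
  · rw [if_neg (by omega : ¬ k = 0), if_neg (by omega : ¬ k = 0), if_neg hlt, if_neg hlt,
      h n (by omega) le_rfl]

lemma CTM.density_formula' {n : ℕ} (M : CTM n) {w ρ q r : ℕ → ℕ → ℝ}
    (htraj : M.Traj w ρ q r) (k : ℕ) (hk1 : 1 ≤ k) (hkn : k ≤ n) (t : ℕ) :
    M.l k * ρ t k = M.l k * ρ 0 k + PhiOf M w ρ t (k - 1) + Cumul M.Δt r t k
      - PhiOf M w ρ t k / M.βbar k :=
  M.density_formula htraj k hk1 hkn t

end Helpers

/-- **Theorem 1 (sufficient optimality conditions for minimal Total Time Spent).**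
Consider a monotonic CTM over a finite horizon `T` with fixed initial densities
`ρ_k(0) ∈ [0, ρ̄_k]`, initial queues `q_k(0) ∈ [0, q̄_k]`, and external demands
`0 ≤ w_k(t) ≤ r̄_k` (and nonnegative upstream mainline demand `w_0(t)`).  Suppose a
feasible metering sequence `r` (i.e. `0 ≤ r_k(t) ≤ r̄_k` and `0 ≤ q_k(t) ≤ q̄_k`)
produces a trajectory in which every cell `k ∈ {1,…,n}` is nonrestrictive at every
time `t ∈ {1,…,T−1}`.  Then this trajectory minimizes the Total Time Spent: for
every feasible metering sequence `r'` with the same initial conditions and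
external demands, `TTS(r) ≤ TTS(r')`. -/
theorem sufficient_optimality_conditions {n : ℕ} (M : CTM n) (T : ℕ)
    (w : ℕ → ℕ → ℝ) (rbar qbar : ℕ → ℝ)
    (hrbar : ∀ k, 0 ≤ rbar k) (hqbar : ∀ k, 0 ≤ qbar k)
    (hw0 : ∀ t, 0 ≤ w t 0)
    (hw : ∀ t k, 1 ≤ k → k ≤ n → w t k ∈ Set.Icc 0 (rbar k))
    (ρ q r ρ' q' r' : ℕ → ℕ → ℝ)
    (htraj : M.Traj w ρ q r) (htraj' : M.Traj w ρ' q' r')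
    (hinit : ∀ k, 1 ≤ k → k ≤ n → ρ' 0 k = ρ 0 k ∧ q' 0 k = q 0 k)
    (hinitρ : ∀ k, 1 ≤ k → k ≤ n → ρ 0 k ∈ Set.Icc 0 (M.ρjam k))
    (hinitq : ∀ k, 1 ≤ k → k ≤ n → q 0 k ∈ Set.Icc 0 (qbar k))
    (hfeas_r : ∀ t k, t < T → 1 ≤ k → k ≤ n → r t k ∈ Set.Icc 0 (rbar k))
    (hfeas_q : ∀ t k, t ≤ T → 1 ≤ k → k ≤ n → q t k ∈ Set.Icc 0 (qbar k))
    (hfeas_r' : ∀ t k, t < T → 1 ≤ k → k ≤ n → r' t k ∈ Set.Icc 0 (rbar k))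
    (hfeas_q' : ∀ t k, t ≤ T → 1 ≤ k → k ≤ n → q' t k ∈ Set.Icc 0 (qbar k))
    (hnonrestrictive : ∀ t, 1 ≤ t → t ≤ T - 1 → ∀ k, 1 ≤ k → k ≤ n →
      ¬ M.Restrictive (w t 0) (ρ t) (q t) qbar k) :
    M.TTS T ρ q ≤ M.TTS T ρ' q' := by
  have hΔ := M.hΔt
  -- cumulative flow dominance: the nonrestrictive trajectory maximizes cumulative flows
  have main : ∀ t, t ≤ T → ∀ k, k ≤ n → PhiOf M w ρ' t k ≤ PhiOf M w ρ t k := by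
    intro t
    induction t with
    | zero =>
      intro _ k _
      rw [PhiOf_zero, PhiOf_zero]
    | succ t ih =>
      intro ht k hk
      have ht' : t ≤ T := Nat.le_of_succ_le ht
      have IH : ∀ j, j ≤ n → PhiOf M w ρ' t j ≤ PhiOf M w ρ t j := fun j hj => ih ht' j hj
      rcases Nat.eq_zero_or_pos k with rfl | hk1
      · exact le_of_eq (PhiOf_col0 M w ρ' ρ (t+1))
      -- now 1 ≤ k ≤ n
      rcases Nat.eq_zero_or_pos t with rfl | ht1
      · -- t = 0 : flows coincide since initial densities coincide
        have hfe : M.flow (w 0 0) (ρ' 0) k = M.flow (w 0 0) (ρ 0) k :=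
          M.flow_congr (w 0 0) (fun j h1 h2 => (hinit j h1 h2).1) k hk1 hk
        rw [PhiOf_succ, PhiOf_succ, PhiOf_zero, PhiOf_zero, hfe]
      -- now 1 ≤ t ≤ T - 1
      have htT1 : t ≤ T - 1 := by omega
      have hL : (0:ℝ) < M.l k := M.hl k
      have hB : (0:ℝ) < M.βbar k := M.βbar_pos k
      -- queue / cumulative-metering relations
      have hqf := M.queue_formula htraj k hk1 hk t
      have hqf' := M.queue_formula htraj' k hk1 hk t
      have hq'init : q' 0 k = q 0 k := (hinit k hk1 hk).2
      have hq'mem := hfeas_q' t k ht' hk1 hk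
      have hqmem := hfeas_q t k ht' hk1 hk
      -- primed cumulative metering upper bound
      have hR'ub : Cumul M.Δt r' t k ≤ q 0 k + Cumul M.Δt w t k := by
        have := hq'mem.1; rw [hqf', hq'init] at this; linarith
      -- density formulas
      have hform := M.density_formula' htraj k hk1 hk t
      have hform' := M.density_formula' htraj' k hk1 hk t
      rw [(hinit k hk1 hk).1] at hform'
      -- the demand-side bound
      set Cmax : ℝ := M.l k * ρ 0 k + PhiOf M w ρ t (k-1) + (q 0 k + Cumul M.Δt w t k)
        with hCmax
      have hd1 : M.flow (w t 0) (ρ' t) k ≤ M.d k (ρ' t k) := by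
        unfold CTM.flow
        rw [if_neg (by omega : ¬ k = 0)]
        by_cases hlt : k < n
        · rw [if_pos hlt]; exact min_le_left _ _
        · rw [if_neg hlt]
          have : k = n := by omega
          subst this
          exact le_rfl
      have hρ'le : ρ' t k ≤ (Cmax - PhiOf M w ρ' t k / M.βbar k) / M.l k := by
        rw [le_div_iff₀ hL]
        have hcomm : ρ' t k * M.l k = M.l k * ρ' t k := mul_comm _ _
        have hIHm : PhiOf M w ρ' t (k-1) ≤ PhiOf M w ρ t (k-1) := IH (k-1) (by omega)
        rw [hCmax]
        linarith
      have Bd : PhiOf M w ρ' (t+1) k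
          ≤ PhiOf M w ρ t k + M.Δt * M.d k ((Cmax - PhiOf M w ρ t k / M.βbar k) / M.l k) := by
        rw [PhiOf_succ]
        have h1 : M.d k (ρ' t k) ≤ M.d k ((Cmax - PhiOf M w ρ' t k / M.βbar k) / M.l k) :=
          M.hd_mono k hρ'le
        have h2 := M.mono_d_map k Cmax (IH k hk)
        have h3 : M.Δt * M.flow (w t 0) (ρ' t) k
            ≤ M.Δt * M.d k ((Cmax - PhiOf M w ρ' t k / M.βbar k) / M.l k) :=
          mul_le_mul_of_nonneg_left (le_trans hd1 h1) hΔ.le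
        linarith
      -- the capacity bound
      have BF : PhiOf M w ρ' (t+1) k ≤ PhiOf M w ρ t k + M.Δt * M.F k := by
        rw [PhiOf_succ]
        have h1 := M.flow_le_F (w t 0) (ρ' t) k hk1
        have h2 := mul_le_mul_of_nonneg_left h1 hΔ.le
        have h3 := IH k hk
        linarith
      -- expand the unprimed step
      rw [PhiOf_succ, PhiOf_succ] at *
      set φ : ℝ := M.flow (w t 0) (ρ t) k with hφdef
      by_cases hF : M.F k ≤ φ
      · have := mul_le_mul_of_nonneg_left hF hΔ.le
        linarith
      push_neg at hF
      -- nonrestrictiveness of cell k at time t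
      have hnrk := hnonrestrictive t ht1 htT1 k hk1 hk
      unfold CTM.Restrictive at hnrk
      push_neg at hnrk
      -- the two possible binding constraints
      by_cases hlt : k < n
      · have hφeq : φ = min (M.d k (ρ t k)) (M.s (k+1) (ρ t (k+1))) := by
          rw [hφdef]; unfold CTM.flow
          rw [if_neg (by omega : ¬ k = 0), if_pos hlt]
        rcases le_total (M.d k (ρ t k)) (M.s (k+1) (ρ t (k+1))) with hab | hba
        · -- demand binding
          have hmin : φ = M.d k (ρ t k) := by rw [hφeq, min_eq_left hab]
          have hflow_eq : M.flow (w t 0) (ρ t) k = M.d k (ρ t k) := by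
            rw [← hφdef, hmin]
          have haF : M.d k (ρ t k) < M.F k := by rw [← hmin]; exact hF
          have hq0 : q t k = 0 := by
            rcases hnrk with ⟨-, h2⟩
            by_contra hne
            have hqpos : 0 < q t k := lt_of_le_of_ne hqmem.1 (Ne.symm hne)
            linarith [h2 hqpos hflow_eq]
          have hR : Cumul M.Δt r t k = q 0 k + Cumul M.Δt w t k := by
            rw [hq0] at hqf; linarith
          have hρeq : ρ t k = (Cmax - PhiOf M w ρ t k / M.βbar k) / M.l k := by
            rw [eq_div_iff hL.ne']
            have hcomm : ρ t k * M.l k = M.l k * ρ t k := mul_comm _ _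
            rw [hR] at hform
            rw [hCmax]
            linarith
          rw [← hρeq] at Bd
          rw [hmin]
          exact Bd
        · -- supply binding
          have hmin : φ = M.s (k+1) (ρ t (k+1)) := by rw [hφeq, min_eq_right hba]
          have hbF : M.s (k+1) (ρ t (k+1)) < M.F k := by rw [← hmin]; exact hF
          -- supply-side bound Bs
          have hL' : (0:ℝ) < M.l (k+1) := M.hl (k+1)
          have hB' : (0:ℝ) < M.βbar (k+1) := M.βbar_pos (k+1)
          have hk1' : 1 ≤ k + 1 := by omega
          have hk' : k + 1 ≤ n := by omega
          set Cmin : ℝ := M.l (k+1) * ρ 0 (k+1)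
              + (q 0 (k+1) + Cumul M.Δt w t (k+1) - qbar (k+1))
              - PhiOf M w ρ t (k+1) / M.βbar (k+1) with hCmin
          have hqf1 := M.queue_formula htraj (k+1) hk1' hk' t
          have hqf1' := M.queue_formula htraj' (k+1) hk1' hk' t
          have hq1'init : q' 0 (k+1) = q 0 (k+1) := (hinit (k+1) hk1' hk').2
          have hq1'mem := hfeas_q' t (k+1) ht' hk1' hk'
          have hq1mem := hfeas_q t (k+1) ht' hk1' hk'
          have hR'lb : q 0 (k+1) + Cumul M.Δt w t (k+1) - qbar (k+1)
              ≤ Cumul M.Δt r' t (k+1) := by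
            have := hq1'mem.2; rw [hqf1', hq1'init] at this; linarith
          have hform1 := M.density_formula' htraj (k+1) hk1' hk' t
          have hform1' := M.density_formula' htraj' (k+1) hk1' hk' t
          rw [(hinit (k+1) hk1' hk').1] at hform1'
          have hidx : k + 1 - 1 = k := by omega
          rw [hidx] at hform1 hform1'
          have hPhidiv : PhiOf M w ρ' t (k+1) / M.βbar (k+1)
              ≤ PhiOf M w ρ t (k+1) / M.βbar (k+1) :=
            (div_le_div_iff_of_pos_right hB').mpr (IH (k+1) hk')
          have hρ'ge : (Cmin + PhiOf M w ρ' t k) / M.l (k+1) ≤ ρ' t (k+1) := by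
            rw [div_le_iff₀ hL']
            have hcomm : ρ' t (k+1) * M.l (k+1) = M.l (k+1) * ρ' t (k+1) := mul_comm _ _
            rw [hCmin]
            linarith
          have hs1 : M.flow (w t 0) (ρ' t) k ≤ M.s (k+1) (ρ' t (k+1)) := by
            unfold CTM.flow
            rw [if_neg (by omega : ¬ k = 0), if_pos hlt]
            exact min_le_right _ _
          have Bs : PhiOf M w ρ' t k + M.Δt * M.flow (w t 0) (ρ' t) k
              ≤ PhiOf M w ρ t k
                + M.Δt * M.s (k+1) ((Cmin + PhiOf M w ρ t k) / M.l (k+1)) := by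
            have h1 : M.s (k+1) (ρ' t (k+1))
                ≤ M.s (k+1) ((Cmin + PhiOf M w ρ' t k) / M.l (k+1)) :=
              M.hs_anti (k+1) hρ'ge
            have h2 := M.mono_s_map (k+1) Cmin (IH k hk)
            have h3 : M.Δt * M.flow (w t 0) (ρ' t) k
                ≤ M.Δt * M.s (k+1) ((Cmin + PhiOf M w ρ' t k) / M.l (k+1)) :=
              mul_le_mul_of_nonneg_left (le_trans hs1 h1) hΔ.le
            linarith
          -- nonrestrictiveness of cell k+1, clause (i)
          have hnrk1 := hnonrestrictive t ht1 htT1 (k+1) hk1' hk'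
          unfold CTM.Restrictive at hnrk1
          push_neg at hnrk1
          have hflow_eq : M.flow (w t 0) (ρ t) (k+1-1) = M.s (k+1) (ρ t (k+1)) := by
            rw [hidx, ← hφdef, hmin]
          have hFidx : M.s (k+1) (ρ t (k+1)) < M.F (k+1-1) := by rw [hidx]; exact hbF
          have hqfull : q t (k+1) = qbar (k+1) := by
            rcases hnrk1 with ⟨h1, -⟩
            by_contra hne
            have hqlt : q t (k+1) < qbar (k+1) := lt_of_le_of_ne hq1mem.2 hne
            linarith [h1 hqlt hflow_eq]
          have hR1 : Cumul M.Δt r t (k+1)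
              = q 0 (k+1) + Cumul M.Δt w t (k+1) - qbar (k+1) := by
            rw [hqfull] at hqf1; linarith
          have hρeq : ρ t (k+1) = (Cmin + PhiOf M w ρ t k) / M.l (k+1) := by
            rw [eq_div_iff hL'.ne']
            have hcomm : ρ t (k+1) * M.l (k+1) = M.l (k+1) * ρ t (k+1) := mul_comm _ _
            rw [hR1] at hform1
            rw [hCmin]
            linarith
          rw [← hρeq] at Bs
          rw [hmin]
          exact Bs
      · -- k = n : only the demand constraint
        have hkeq : k = n := by omega
        have hφeq : φ = M.d k (ρ t k) := by
          rw [hφdef]; unfold CTM.flow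
          rw [if_neg (by omega : ¬ k = 0), if_neg hlt]
          rw [hkeq]
        have hflow_eq : M.flow (w t 0) (ρ t) k = M.d k (ρ t k) := by rw [← hφdef, hφeq]
        have haF : M.d k (ρ t k) < M.F k := by rw [← hφeq]; exact hF
        have hq0 : q t k = 0 := by
          rcases hnrk with ⟨-, h2⟩
          by_contra hne
          have hqpos : 0 < q t k := lt_of_le_of_ne hqmem.1 (Ne.symm hne)
          linarith [h2 hqpos hflow_eq]
        have hR : Cumul M.Δt r t k = q 0 k + Cumul M.Δt w t k := by
          rw [hq0] at hqf; linarith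
        have hρeq : ρ t k = (Cmax - PhiOf M w ρ t k / M.βbar k) / M.l k := by
          rw [eq_div_iff hL.ne']
          have hcomm : ρ t k * M.l k = M.l k * ρ t k := mul_comm _ _
          rw [hR] at hform
          rw [hCmax]
          linarith
        rw [← hρeq] at Bd
        rw [hφeq]
        exact Bd
  -- conclude : compare TTS via the cumulative flows
  rw [CTM.TTS, CTM.TTS]
  apply mul_le_mul_of_nonneg_left _ hΔ.le
  apply Finset.sum_le_sum
  intro t htmem
  have htT : t ≤ T := by
    have := Finset.mem_range.mp htmem; omega
  have key := sum_shift_le n (fun j => PhiOf M w ρ t j - PhiOf M w ρ' t j) M.βbar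
    (by simpa using (PhiOf_col0 M w ρ ρ' t).symm ▸ (sub_self _))
    (fun k h1 h2 => sub_nonneg.mpr (main t htT k h2))
    (fun k => ⟨M.βbar_pos k, M.βbar_le_one k⟩)
  have hdiff : ∑ k ∈ Finset.Icc 1 n, (M.l k * ρ t k + q t k)
      - ∑ k ∈ Finset.Icc 1 n, (M.l k * ρ' t k + q' t k)
      = ∑ k ∈ Finset.Icc 1 n,
          ((fun j => PhiOf M w ρ t j - PhiOf M w ρ' t j) (k-1)
            - (fun j => PhiOf M w ρ t j - PhiOf M w ρ' t j) k / M.βbar k) := by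
    rw [← Finset.sum_sub_distrib]
    apply Finset.sum_congr rfl
    intro k hkmem
    have hkm := Finset.mem_Icc.mp hkmem
    have hk1 := hkm.1
    have hk := hkm.2
    have hform := M.density_formula' htraj k hk1 hk t
    have hform' := M.density_formula' htraj' k hk1 hk t
    rw [(hinit k hk1 hk).1] at hform'
    have hqf := M.queue_formula htraj k hk1 hk t
    have hqf' := M.queue_formula htraj' k hk1 hk t
    rw [(hinit k hk1 hk).2] at hqf'
    have hL : (0:ℝ) < M.l k := M.hl k
    have hsd : (PhiOf M w ρ t k - PhiOf M w ρ' t k) / M.βbar k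
        = PhiOf M w ρ t k / M.βbar k - PhiOf M w ρ' t k / M.βbar k := sub_div _ _ _
    simp only []
    rw [hsd]
    have hcomm : M.l k * ρ t k = M.l k * ρ t k := rfl
    linarith
  linarith [key, hdiff]
end
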